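/- arXiv:1710.00797 — 2 statements merged into one kernel-verified Lean document; each statement's English description precedes it below -/
import Mathlib

section
/- Let f : ℝⁿ → ℝ be differentiable and L-smooth (i.e., ‖∇f(y) − ∇f(x)‖ ≤ L‖y − x‖ for all x, y, in the Euclidean norm), let x* be a global minimizer of f with f* = f(x*), and suppose f is α-weakly-quasi-convex with respect to x* for some α ∈ (0,1]. Let the sequence (x_k) be generated by gradient descent with fixed step length 1/L, i.e., x_{k+1} = x_k − (1/L)∇f(x_k), starting from x_0, and set R = ‖x_0 − x*‖. Then for every natural number T, f(x_T) − f* ≤ L·R²/(α·(T+1)). -/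
/-!
Gradient descent with step `1/L` decreases `f` by at least `‖∇f(x_k)‖² / (2L)` per step (descent
lemma). Expanding `‖x_{k+1} - x*‖²` and using weak quasi-convexity shows that the potential
`Φ_k = L ‖x_k - x*‖² + 2 (f(x_k) - f*)` drops by at least `2α (f(x_k) - f*)`. Summing and using
that `f(x_k) - f*` is nonincreasing gives `2α (T+1) (f(x_T) - f*) ≤ Φ_0 ≤ 2 L R²`, where the last
step is the descent lemma at `x*`, at which the gradient vanishes.
-/

open scoped RealInnerProductSpace

open Finset

section

variable {E : Type*} [NormedAddCommGroup E] [InnerProductSpace ℝ E] [CompleteSpace E]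
  {f : E → ℝ} {L : ℝ}

theorem HasGradientAt.hasDerivAt_comp_add_smul {g x v : E} {t : ℝ}
    (hf : HasGradientAt f g (x + t • v)) :
    HasDerivAt (fun s : ℝ => f (x + s • v)) ⟪g, v⟫ t := by
  have hline : HasDerivAt (fun s : ℝ => x + s • v) v t := by
    simpa using ((hasDerivAt_id t).smul_const v).const_add x
  exact (hasGradientAt_iff_hasFDerivAt.1 hf).comp_hasDerivAt t hline

theorem le_add_inner_gradient_add_sq (hf : Differentiable ℝ f)
    (hsmooth : ∀ x y, ‖gradient f y - gradient f x‖ ≤ L * ‖y - x‖) (x y : E) :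
    f y ≤ f x + ⟪gradient f x, y - x⟫ + L / 2 * ‖y - x‖ ^ 2 := by
  set v := y - x
  have hderiv (t : ℝ) : HasDerivAt (fun s : ℝ => f (x + s • v)) ⟪gradient f (x + t • v), v⟫ t :=
    (hf _).hasGradientAt.hasDerivAt_comp_add_smul
  set c := ⟪gradient f x, v⟫
  have hparabola (t : ℝ) :
      HasDerivAt (fun s : ℝ => f x + s * c + L / 2 * s ^ 2 * ‖v‖ ^ 2) (c + L * t * ‖v‖ ^ 2) t := by
    refine ((((hasDerivAt_id' t).mul_const c).const_add (f x)).add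
      (((hasDerivAt_pow 2 t).const_mul (L / 2)).mul_const (‖v‖ ^ 2))).congr_deriv ?_
    push_cast; ring
  have hslope (t : ℝ) (ht : t ∈ Set.Ico (0 : ℝ) 1) :
      ⟪gradient f (x + t • v), v⟫ ≤ c + L * t * ‖v‖ ^ 2 := by
    have hcs : ⟪gradient f (x + t • v) - gradient f x, v⟫ ≤ L * t * ‖v‖ ^ 2 :=
      calc _ ≤ ‖gradient f (x + t • v) - gradient f x‖ * ‖v‖ := real_inner_le_norm _ _
        _ ≤ L * ‖t • v‖ * ‖v‖ := by
            simpa using mul_le_mul_of_nonneg_right (hsmooth x (x + t • v)) (norm_nonneg v)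
        _ = L * t * ‖v‖ ^ 2 := by rw [norm_smul, Real.norm_of_nonneg ht.1]; ring
    rw [inner_sub_left] at hcs
    linarith
  have hcompare := image_le_of_deriv_right_le_deriv_boundary (a := 0) (b := 1)
    (fun t _ => (hderiv t).continuousAt.continuousWithinAt)
    (fun t _ => (hderiv t).hasDerivWithinAt) (by simp)
    (fun t _ => (hparabola t).continuousAt.continuousWithinAt)
    (fun t _ => (hparabola t).hasDerivWithinAt) hslope (Set.right_mem_Icc.2 zero_le_one)
  simpa [v] using hcompare

theorem apply_sub_smul_gradient_le (hf : Differentiable ℝ f)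
    (hsmooth : ∀ x y, ‖gradient f y - gradient f x‖ ≤ L * ‖y - x‖) (hL : L ≠ 0) (x : E) :
    f (x - (1 / L) • gradient f x) ≤ f x - ‖gradient f x‖ ^ 2 / (2 * L) := by
  have h := le_add_inner_gradient_add_sq hf hsmooth x (x - (1 / L) • gradient f x)
  rw [sub_sub_cancel_left, inner_neg_right, real_inner_smul_right, real_inner_self_eq_norm_sq,
    norm_neg, norm_smul, mul_pow, Real.norm_eq_abs, sq_abs] at h
  have hcoeff : -(1 / L * ‖gradient f x‖ ^ 2) + L / 2 * ((1 / L) ^ 2 * ‖gradient f x‖ ^ 2)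
      = -(‖gradient f x‖ ^ 2 / (2 * L)) := by
    field_simp; ring
  linarith

theorem mul_norm_sq_add_two_mul_apply_sub_smul_gradient_le (hf : Differentiable ℝ f)
    (hsmooth : ∀ x y, ‖gradient f y - gradient f x‖ ≤ L * ‖y - x‖) (hL : L ≠ 0) (x z : E) :
    L * ‖x - (1 / L) • gradient f x - z‖ ^ 2 + 2 * f (x - (1 / L) • gradient f x)
      ≤ L * ‖x - z‖ ^ 2 + 2 * f x - 2 * ⟪gradient f x, x - z⟫ := by
  have hexpand : L * ‖x - (1 / L) • gradient f x - z‖ ^ 2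
      = L * ‖x - z‖ ^ 2 - 2 * ⟪gradient f x, x - z⟫ + ‖gradient f x‖ ^ 2 / L := by
    rw [sub_right_comm, norm_sub_sq_real, real_inner_smul_right, real_inner_comm, norm_smul,
      mul_pow, Real.norm_eq_abs, sq_abs]
    field_simp
  have hdescent := apply_sub_smul_gradient_le hf hsmooth hL x
  have hhalf : ‖gradient f x‖ ^ 2 / L = 2 * (‖gradient f x‖ ^ 2 / (2 * L)) := by
    field_simp
  linarith

theorem IsLocalMin.gradient_eq_zero {a : E} (h : IsLocalMin f a) : gradient f a = 0 := by
  rw [gradient, h.fderiv_eq_zero, map_zero]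

end

theorem Antitone.succ_mul_le_of_forall_add_le {δ Φ : ℕ → ℝ} (hδ : Antitone δ)
    (hΦ : ∀ k, 0 ≤ Φ k) (hdec : ∀ k, Φ (k + 1) + δ k ≤ Φ k) (T : ℕ) :
    (T + 1) * δ T ≤ Φ 0 :=
  calc (T + 1) * δ T = ∑ _k ∈ range (T + 1), δ T := by simp
    _ ≤ ∑ k ∈ range (T + 1), δ k :=
      sum_le_sum fun k hk => hδ (Nat.lt_succ_iff.1 (mem_range.1 hk))
    _ ≤ ∑ k ∈ range (T + 1), (Φ k - Φ (k + 1)) := sum_le_sum fun k _ => by linarith [hdec k]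
    _ = Φ 0 - Φ (T + 1) := sum_range_sub' Φ (T + 1)
    _ ≤ Φ 0 := by linarith [hΦ (T + 1)]

theorem gradient_descent_wqc
    (n : ℕ) (f : EuclideanSpace ℝ (Fin n) → ℝ)
    (hdiff : Differentiable ℝ f)
    (L : ℝ) (hL : 0 < L)
    (hsmooth : ∀ x y : EuclideanSpace ℝ (Fin n),
      ‖gradient f y - gradient f x‖ ≤ L * ‖y - x‖)
    (xstar : EuclideanSpace ℝ (Fin n))
    (hmin : ∀ x, f xstar ≤ f x)
    (α : ℝ) (hα : α ∈ Set.Ioc (0 : ℝ) 1)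
    (hwqc : ∀ x, α * (f x - f xstar) ≤ ⟪gradient f x, x - xstar⟫)
    (x : ℕ → EuclideanSpace ℝ (Fin n))
    (hstep : ∀ k : ℕ, x (k + 1) = x k - (1 / L) • gradient f (x k))
    (R : ℝ) (hR : R = ‖x 0 - xstar‖) :
    ∀ T : ℕ, f (x T) - f xstar ≤ L * R ^ 2 / (α * (T + 1)) := by
  intro T
  set δ : ℕ → ℝ := fun k => f (x k) - f xstar
  have hδ_nonneg (k : ℕ) : 0 ≤ δ k := sub_nonneg.2 (hmin (x k))
  have hδ_anti : Antitone δ := antitone_nat_of_succ_le fun k => by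
    have hdescent := apply_sub_smul_gradient_le hdiff hsmooth hL.ne' (x k)
    have hdrop : 0 ≤ ‖gradient f (x k)‖ ^ 2 / (2 * L) := by positivity
    simp only [δ, hstep]
    linarith
  have hδ₀ : 2 * δ 0 ≤ L * R ^ 2 := by
    have hlocal : IsLocalMin f xstar := Filter.Eventually.of_forall hmin
    have hquad := le_add_inner_gradient_add_sq hdiff hsmooth xstar (x 0)
    rw [hlocal.gradient_eq_zero, inner_zero_left] at hquad
    simp only [δ, hR]
    linarith
  have h2αδ_anti : Antitone fun k => 2 * α * δ k := fun _ _ hij =>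
    mul_le_mul_of_nonneg_left (hδ_anti hij) (by linarith [hα.1])
  have hbound := h2αδ_anti.succ_mul_le_of_forall_add_le
    (Φ := fun k => L * ‖x k - xstar‖ ^ 2 + 2 * δ k)
    (fun k => by have := hδ_nonneg k; positivity)
    (fun k => by
      have hstep_potential :=
        mul_norm_sq_add_two_mul_apply_sub_smul_gradient_le hdiff hsmooth hL.ne' (x k) xstar
      simp only [δ, hstep]
      linarith [hwqc (x k)]) T
  rw [le_div_iff₀ (by have := hα.1; positivity)]
  simp only [← hR] at hbound
  linarith
end

section
/- The function f : ℝ → ℝ defined by f(x) = |x|·(1 − e^{−|x|}) is differentiable, has 0 as its unique global minimizer with f(0) = 0, is 1-weakly-quasi-convex with respect to 0 (i.e., f(x) ≤ f'(x)·x for all x ∈ ℝ), but is not convex on ℝ. -/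
/-! Write `f = φ ∘ |·|` with `φ t = t (1 - e^{-t})`. Away from `0` the chain rule gives
`f'(x) x = |x| φ'(|x|) = f(x) + x² e^{-|x|} ≥ f(x)`, and at `0` the bound `0 ≤ f x ≤ x²` forces
`f'(0) = 0`. On `x > 0`, `f'(x) = 1 + (x - 1) e^{-x}`, so `f'(3) < f'(2)` because `2 < e`:
the derivative is not monotone, hence `f` is not convex. -/

open Real Filter Asymptotics Topology

theorem hasDerivAt_zero_of_norm_le_sq {𝕜 F : Type*} [NontriviallyNormedField 𝕜]
    [NormedAddCommGroup F] [NormedSpace 𝕜 F] {f : 𝕜 → F} (hf : ∀ y, ‖f y‖ ≤ ‖y‖ ^ 2) :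
    HasDerivAt f 0 0 := by
  have hf0 : f 0 = 0 := norm_le_zero_iff.mp (by simpa using hf 0)
  have hO : f =O[𝓝 0] fun y => y ^ 2 := IsBigO.of_bound 1 (by simpa using Eventually.of_forall hf)
  refine .of_isLittleO ?_
  simpa [hf0] using hO.trans_isLittleO (isLittleO_pow_id one_lt_two)

theorem hasDerivAt_mul_one_sub_exp_neg (t : ℝ) :
    HasDerivAt (fun t => t * (1 - exp (-t))) (1 - exp (-t) + t * exp (-t)) t :=
  ((hasDerivAt_id' t).fun_mul ((hasDerivAt_neg t).exp.const_sub 1)).congr_deriv (by ring)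

noncomputable def absOneSubExp (x : ℝ) : ℝ := |x| * (1 - exp (-|x|))

@[simp]
theorem absOneSubExp_zero : absOneSubExp 0 = 0 := by simp [absOneSubExp]

theorem absOneSubExp_pos {x : ℝ} (hx : x ≠ 0) : 0 < absOneSubExp x := by
  have hx' : 0 < |x| := abs_pos.mpr hx
  exact mul_pos hx' (sub_pos.mpr (exp_lt_one_iff.mpr (neg_lt_zero.mpr hx')))

theorem absOneSubExp_nonneg (x : ℝ) : 0 ≤ absOneSubExp x := by
  rcases eq_or_ne x 0 with rfl | hx
  · simp
  · exact (absOneSubExp_pos hx).le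

theorem absOneSubExp_le_sq (x : ℝ) : absOneSubExp x ≤ x ^ 2 := by
  rw [absOneSubExp, ← sq_abs, sq]
  gcongr
  linarith [one_sub_le_exp_neg |x|]

theorem hasDerivAt_absOneSubExp_zero : HasDerivAt absOneSubExp 0 0 :=
  hasDerivAt_zero_of_norm_le_sq fun y => by
    simpa [abs_of_nonneg (absOneSubExp_nonneg y)] using absOneSubExp_le_sq y

theorem hasDerivAt_absOneSubExp {x : ℝ} (hx : x ≠ 0) :
    HasDerivAt absOneSubExp ((1 - exp (-|x|) + |x| * exp (-|x|)) * SignType.sign x) x :=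
  (hasDerivAt_mul_one_sub_exp_neg |x|).comp x (hasDerivAt_abs hx)

theorem differentiable_absOneSubExp : Differentiable ℝ absOneSubExp := fun x => by
  rcases eq_or_ne x 0 with rfl | hx
  · exact hasDerivAt_absOneSubExp_zero.differentiableAt
  · exact (hasDerivAt_absOneSubExp hx).differentiableAt

theorem deriv_absOneSubExp_mul_self (x : ℝ) :
    deriv absOneSubExp x * x = absOneSubExp x + x ^ 2 * exp (-|x|) := by
  rcases eq_or_ne x 0 with rfl | hx
  · simp
  · rw [(hasDerivAt_absOneSubExp hx).deriv, mul_assoc, sign_mul_self, absOneSubExp, ← sq_abs]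
    ring

theorem absOneSubExp_le_deriv_mul_self (x : ℝ) : absOneSubExp x ≤ deriv absOneSubExp x * x := by
  rw [deriv_absOneSubExp_mul_self]
  exact le_add_of_nonneg_right (by positivity)

theorem deriv_absOneSubExp_of_pos {x : ℝ} (hx : 0 < x) :
    deriv absOneSubExp x = 1 + (x - 1) * exp (-x) := by
  rw [(hasDerivAt_absOneSubExp hx.ne').deriv, abs_of_pos hx, sign_pos hx,
    SignType.coe_one]
  ring

theorem not_convexOn_absOneSubExp : ¬ ConvexOn ℝ Set.univ absOneSubExp := by
  intro hconv
  have hmono := hconv.monotoneOn_deriv fun x _ => differentiable_absOneSubExp x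
  have h23 : deriv absOneSubExp 2 ≤ deriv absOneSubExp 3 := hmono trivial trivial (by norm_num)
  rw [deriv_absOneSubExp_of_pos two_pos, deriv_absOneSubExp_of_pos three_pos] at h23
  have he : (2 : ℝ) < exp 1 := by linarith [add_one_lt_exp one_ne_zero]
  have : 2 * exp (-3) < exp (-2) := by
    calc 2 * exp (-3) < exp 1 * exp (-3) := by gcongr
      _ = exp (-2) := by rw [← exp_add]; norm_num
  linarith

theorem abs_one_sub_exp_wqc_not_convex :
    let f : ℝ → ℝ := fun x => |x| * (1 - Real.exp (-|x|))
    Differentiable ℝ f ∧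
      f 0 = 0 ∧
      (∀ x : ℝ, f 0 ≤ f x) ∧
      (∀ x : ℝ, x ≠ 0 → f 0 < f x) ∧
      (∀ x : ℝ, f x ≤ deriv f x * x) ∧
      ¬ ConvexOn ℝ Set.univ f := by
  intro f
  have hf : f = absOneSubExp := rfl
  rw [hf, absOneSubExp_zero]
  exact ⟨differentiable_absOneSubExp, rfl, absOneSubExp_nonneg, fun _ => absOneSubExp_pos,
    absOneSubExp_le_deriv_mul_self, not_convexOn_absOneSubExp⟩
end
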